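/- Suppose r₁ < N₂/N₁ < r₂. Then every germ solution of the call-center system satisfies ρ₁ = N₁/τ̄, ρ₅ = π_ext·N₁/τ̄ and ρ₆ = (N₂ − N₁·r₁)/τ_ur'. -/

import Mathlib

/-- Lexicographic order on `ℝ × ℝ`. -/
def lexLe (p q : ℝ × ℝ) : Prop := p.1 < q.1 ∨ (p.1 = q.1 ∧ p.2 ≤ q.2)

/-- Strict lexicographic order on `ℝ × ℝ`. -/
def lexLt (p q : ℝ × ℝ) : Prop := lexLe p q ∧ p ≠ q

/-- Lexicographic minimum on `ℝ × ℝ`. -/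
noncomputable def lexMin (p q : ℝ × ℝ) : ℝ × ℝ :=
  if p.1 < q.1 ∨ (p.1 = q.1 ∧ p.2 ≤ q.2) then p else q

/-- Parameters of the emergency call center: routing proportions `pe, pu, pa`
(for extremely urgent, urgent, and advice calls), holding times
`te, tu, ta, ttr, te', tu'`, and staffing levels `N1, N2`. -/
structure CCParams where
  pe : ℝ
  pu : ℝ
  pa : ℝ
  te : ℝ
  tu : ℝ
  ta : ℝ
  ttr : ℝ
  te' : ℝ
  tu' : ℝ
  N1 : ℝ
  N2 : ℝ
  hpe : 0 < pe
  hpu : 0 < pu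
  hpa : 0 < pa
  hsum : pe + pu + pa = 1
  hte : 0 < te
  htu : 0 < tu
  hta : 0 < ta
  httr : 0 < ttr
  hte' : 0 < te'
  htu' : 0 < tu'
  hN1 : 0 < N1
  hN2 : 0 < N2

/-- Average treatment time at level 1. -/
noncomputable def CCParams.tbar (P : CCParams) : ℝ :=
  P.pe * (P.te + P.ttr) + P.pu * P.tu + P.pa * P.ta

/-- First phase transition point. -/
noncomputable def CCParams.r1 (P : CCParams) : ℝ := P.pe * (P.ttr + P.te') / P.tbar

/-- Second phase transition point. -/
noncomputable def CCParams.r2 (P : CCParams) : ℝ :=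
  (P.pe * (P.ttr + P.te') + P.pu * P.tu') / P.tbar

/-- A germ solution of the call-center system. -/
noncomputable def CCParams.GermSol (P : CCParams) (ρ1 u1 ρ5 u5 ρ6 u6 : ℝ) : Prop :=
  0 ≤ ρ1 ∧ 0 ≤ ρ5 ∧ 0 ≤ ρ6 ∧
  -- (a)
  (ρ1, u1) = (ρ5 + P.pu * ρ1 + P.pa * ρ1,
    P.N1 + (u5 - ρ5 * P.ttr) + P.pu * (u1 - ρ1 * P.tu) + P.pa * (u1 - ρ1 * P.ta)) ∧
  -- (b), case ρ6 = 0
  (ρ6 = 0 → (ρ5, u5) = lexMin (ρ5, P.N2 + u5 - ρ5 * (P.ttr + P.te'))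
      (P.pe * ρ1, P.pe * (u1 - ρ1 * P.te))) ∧
  -- (b), case ρ6 > 0
  (0 < ρ6 → (ρ5, u5) = (P.pe * ρ1, P.pe * (u1 - ρ1 * P.te))) ∧
  -- (c)
  (ρ6, u6) = lexMin (ρ6, P.N2 - ρ5 * (P.ttr + P.te') + u6 - ρ6 * P.tu')
      (P.pu * ρ1, P.pu * (u1 - ρ1 * P.tu))

/-- The δ-discretized call-center equations at time `t`. -/
noncomputable def CCParams.Eqns (P : CCParams) (z1 z5 z6 : ℝ → ℝ) (δ t : ℝ) : Prop :=
  z1 t = P.N1 + z5 (t - P.ttr) + P.pu * z1 (t - P.tu) + P.pa * z1 (t - P.ta) ∧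
  z5 t = min (P.N2 + z5 (t - P.ttr - P.te') + z6 (t - P.tu') - z6 (t - δ))
      (P.pe * z1 (t - P.te)) ∧
  z6 t = min (P.N2 + z5 (t - P.ttr - P.te') + z6 (t - P.tu') - z5 t)
      (P.pu * z1 (t - P.tu))

/-!
By (a) and `π_ext + π_ur + π_adv = 1`, `ρ₅ = π_ext ρ₁` and level 1 is saturated up to the slack
`π_ext·(u₁ − ρ₁τ_ext) − u₅ = N₁ − ρ₁τ̄`, which (b) forces to be nonnegative. If it were
positive, (b) could only hold through the level-2 branch, i.e. `ρ₅(τ_tr + τ_ext') = N₂`; but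
`ρ₁ ≤ N₁/τ̄` then gives `N₂ ≤ N₁r₁`. So `ρ₁ = N₁/τ̄`. Now (c) says the level-2 load
`ρ₅(τ_tr + τ_ext') + ρ₆τ_ur'` is at most `N₂`, and equal to it unless all urgent calls are served
(`ρ₆ = π_ur ρ₁`); in the latter case the load would be `N₁r₂ > N₂`. Hence the load is `N₂`,
which determines `ρ₆`.
-/

theorem lexLe_mk_mk_iff {a x y : ℝ} : lexLe (a, x) (a, y) ↔ x ≤ y := by
  simp [lexLe]

theorem lexLe_lexMin_left (p q : ℝ × ℝ) : lexLe (lexMin p q) p := by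
  unfold lexMin lexLe
  split_ifs with h
  · exact Or.inr ⟨rfl, le_rfl⟩
  · grind

theorem lexMin_eq_or (p q : ℝ × ℝ) : lexMin p q = p ∨ lexMin p q = q := by
  unfold lexMin
  split_ifs
  exacts [Or.inl rfl, Or.inr rfl]

theorem lexMin_mk_mk (a x y : ℝ) : lexMin (a, x) (a, y) = (a, min x y) := by
  unfold lexMin min
  split_ifs <;> grind

namespace CCParams

variable (P : CCParams)

theorem tbar_pos : 0 < P.tbar := by
  have := P.hpe; have := P.hpu; have := P.hpa; have := P.hte; have := P.htu; have := P.hta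
  have := P.httr
  unfold tbar
  positivity

theorem mul_r1 : P.N1 * P.r1 = P.pe * (P.ttr + P.te') * (P.N1 / P.tbar) := by
  unfold r1
  ring

theorem mul_r2 :
    P.N1 * P.r2 = P.pe * (P.ttr + P.te') * (P.N1 / P.tbar) + P.pu * P.tu' * (P.N1 / P.tbar) := by
  unfold r2
  ring

namespace GermSol

variable {P} {ρ1 u1 ρ5 u5 ρ6 u6 : ℝ} (hsol : P.GermSol ρ1 u1 ρ5 u5 ρ6 u6)
include hsol

theorem rho5_eq : ρ5 = P.pe * ρ1 := by
  obtain ⟨-, -, -, ha, -⟩ := hsol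
  have h := congrArg Prod.fst ha
  linear_combination -h - ρ1 * P.hsum

theorem level1_slack : P.pe * (u1 - ρ1 * P.te) - u5 = P.N1 - ρ1 * P.tbar := by
  have hρ5 := hsol.rho5_eq
  obtain ⟨-, -, -, ha, -⟩ := hsol
  have h := congrArg Prod.snd ha
  unfold tbar
  linear_combination h + u1 * P.hsum - P.ttr * hρ5

theorem u5_le_and_eq_or :
    u5 ≤ P.pe * (u1 - ρ1 * P.te) ∧
      (u5 = P.pe * (u1 - ρ1 * P.te) ∨ ρ5 * (P.ttr + P.te') = P.N2) := by
  have hρ5 := hsol.rho5_eq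
  obtain ⟨-, -, hρ6, -, hb_idle, hb_busy, -⟩ := hsol
  rcases hρ6.eq_or_lt with hρ6 | hρ6
  · have h := hb_idle hρ6.symm
    rw [← hρ5, lexMin_mk_mk, Prod.mk.injEq] at h
    refine ⟨h.2 ▸ min_le_right _ _, ?_⟩
    rcases min_choice (P.N2 + u5 - ρ5 * (P.ttr + P.te')) (P.pe * (u1 - ρ1 * P.te)) with hm | hm
    · right; linarith [h.2]
    · left; rw [h.2, hm]
  · have h := congrArg Prod.snd (hb_busy hρ6)
    exact ⟨h.le, Or.inl h⟩

theorem rho1_le : ρ1 ≤ P.N1 / P.tbar := by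
  rw [le_div_iff₀ P.tbar_pos]
  linarith [hsol.level1_slack, hsol.u5_le_and_eq_or.1]

theorem rho1_eq_or : ρ1 = P.N1 / P.tbar ∨ ρ5 * (P.ttr + P.te') = P.N2 := by
  refine hsol.u5_le_and_eq_or.2.imp_left fun h => ?_
  rw [eq_div_iff P.tbar_pos.ne']
  linarith [hsol.level1_slack]

theorem level2_load_le : ρ5 * (P.ttr + P.te') + ρ6 * P.tu' ≤ P.N2 := by
  obtain ⟨-, -, -, -, -, -, hc⟩ := hsol
  have h := lexLe_lexMin_left (ρ6, P.N2 - ρ5 * (P.ttr + P.te') + u6 - ρ6 * P.tu')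
    (P.pu * ρ1, P.pu * (u1 - ρ1 * P.tu))
  rw [← hc, lexLe_mk_mk_iff] at h
  linarith

theorem level2_load_eq_or : ρ5 * (P.ttr + P.te') + ρ6 * P.tu' = P.N2 ∨ ρ6 = P.pu * ρ1 := by
  obtain ⟨-, -, -, -, -, -, hc⟩ := hsol
  rcases lexMin_eq_or (ρ6, P.N2 - ρ5 * (P.ttr + P.te') + u6 - ρ6 * P.tu')
    (P.pu * ρ1, P.pu * (u1 - ρ1 * P.tu)) with h | h
  · left
    have h2 := congrArg Prod.snd (hc.trans h)
    linarith
  · exact Or.inr (congrArg Prod.fst (hc.trans h))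

end GermSol

end CCParams

/-- if `r₁ < N₂/N₁ < r₂`, every germ solution satisfies `ρ₁ = N₁/τ̄`,
`ρ₅ = π_ext·N₁/τ̄` and `ρ₆ = (N₂ − N₁·r₁)/τ_ur'`. -/
theorem throughput_phase_mid (P : CCParams)
    (hphase1 : P.r1 < P.N2 / P.N1) (hphase2 : P.N2 / P.N1 < P.r2)
    (ρ1 u1 ρ5 u5 ρ6 u6 : ℝ) (hsol : P.GermSol ρ1 u1 ρ5 u5 ρ6 u6) :
    ρ1 = P.N1 / P.tbar ∧
    ρ5 = P.pe * P.N1 / P.tbar ∧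
    ρ6 = (P.N2 - P.N1 * P.r1) / P.tu' := by
  rw [lt_div_iff₀' P.hN1] at hphase1
  rw [div_lt_iff₀' P.hN1] at hphase2
  have hc : 0 ≤ P.pe * (P.ttr + P.te') := by
    have := P.hpe; have := P.httr; have := P.hte'
    positivity
  have hρ1 : ρ1 = P.N1 / P.tbar := by
    refine hsol.rho1_eq_or.resolve_right fun hN2 => hphase1.not_ge ?_
    calc P.N2 = P.pe * (P.ttr + P.te') * ρ1 := by rw [← hN2, hsol.rho5_eq]; ring
      _ ≤ P.N1 * P.r1 := P.mul_r1 ▸ mul_le_mul_of_nonneg_left hsol.rho1_le hc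
  have hρ5 : ρ5 * (P.ttr + P.te') = P.N1 * P.r1 := by
    rw [P.mul_r1, hsol.rho5_eq, hρ1]; ring
  have hload : ρ5 * (P.ttr + P.te') + ρ6 * P.tu' = P.N2 := by
    refine hsol.level2_load_eq_or.resolve_right fun hρ6 => hsol.level2_load_le.not_gt ?_
    rw [hρ6, hsol.rho5_eq, hρ1]
    exact hphase2.trans_eq (by rw [P.mul_r2]; ring)
  refine ⟨hρ1, by rw [hsol.rho5_eq, hρ1, mul_div_assoc], ?_⟩
  rw [eq_div_iff P.htu'.ne']
  linarith
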